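/- Let π be a probability measure on ℝ^d and η : {(x,y) ∈ ℝ^d×ℝ^d : x ≠ y} → [0,∞) be measurable with M := sup_{y∈ℝ^d} ∫ min(1, |x−y|²) η(x,y) dπ(x) < ∞. Let μ be a probability measure with μ ≪ π whose density f = dμ/dπ is everywhere positive and satisfies, for some constants C_f, C_g ≥ 0 and all x, y ∈ ℝ^d: |f(x) − f(y)| ≤ C_f · min(1, |x−y|) and |log f(x) − log f(y)| ≤ C_g · min(1, |x−y|). Then I_η(μ∣π) ≤ (C_f·C_g/2)·M; in particular, I_η(μ∣π) < ∞. -/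

import Mathlib

open MeasureTheory
open scoped ENNReal Classical

/-- The integrand of the nonlocal relative Fisher information:
`F(r,s) = (r−s)(log r − log s)` for `r,s > 0`, `F(0,0) = 0`, and
`F(r,0) = F(0,r) = ∞` for `r > 0`. -/
noncomputable def Fent (r s : ℝ) : ℝ≥0∞ :=
  if 0 < r ∧ 0 < s then ENNReal.ofReal ((r - s) * (Real.log r - Real.log s))
  else if r = 0 ∧ s = 0 then 0
  else ⊤

/-- The nonlocal Fisher information
`I_η(μ∣π) = (1/2) ∬_{x≠y} F(f(x),f(y)) η(x,y) dπ(x) dπ(y)` with `f = dμ/dπ` if `μ ≪ π`,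
and `∞` otherwise. -/
noncomputable def fisher {X : Type*} [MeasurableSpace X]
    (η : X → X → ℝ) (μ π : Measure X) : ℝ≥0∞ :=
  if μ ≪ π then
    (1/2 : ℝ≥0∞) * ∫⁻ x, ∫⁻ y,
      (if x ≠ y then
        Fent (μ.rnDeriv π x).toReal (μ.rnDeriv π y).toReal * ENNReal.ofReal (η x y)
       else 0) ∂π ∂π
  else ⊤

/-! For `x ≠ y` the integrand `(f x - f y)(log f x - log f y) η(x,y)` is bounded by
`C_f C_g min(1, |x-y|²) η(x,y)`, because both factors are controlled by `min(1, |x-y|)`.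
Integrating first in `x` (Tonelli) and using the uniform bound `M` gives the claim. -/

lemma Fent_le_ofReal_mul {r s a b : ℝ} (hr : 0 < r) (hs : 0 < s)
    (hrs : |r - s| ≤ a) (hlog : |Real.log r - Real.log s| ≤ b) :
    Fent r s ≤ ENNReal.ofReal (a * b) := by
  rw [Fent, if_pos ⟨hr, hs⟩]
  refine ENNReal.ofReal_le_ofReal ?_
  calc (r - s) * (Real.log r - Real.log s)
      ≤ |r - s| * |Real.log r - Real.log s| := by rw [← abs_mul]; exact le_abs_self _
    _ ≤ a * b := mul_le_mul hrs hlog (abs_nonneg _) ((abs_nonneg _).trans hrs)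

lemma min_one_sq {t : ℝ} (ht : 0 ≤ t) : min 1 t ^ 2 = min 1 (t ^ 2) := by
  rcases le_total t 1 with h | h
  · rw [min_eq_right h, min_eq_right (pow_le_one₀ ht h)]
  · rw [min_eq_left h, min_eq_left (one_le_pow₀ h), one_pow]

lemma Fent_mul_le_of_abs_sub_le_mul_min {r s t Cf Cg η : ℝ} (hr : 0 < r) (hs : 0 < s)
    (ht : 0 ≤ t) (hCf : 0 ≤ Cf) (hCg : 0 ≤ Cg)
    (hrs : |r - s| ≤ Cf * min 1 t) (hlog : |Real.log r - Real.log s| ≤ Cg * min 1 t) :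
    Fent r s * ENNReal.ofReal η ≤
      ENNReal.ofReal (Cf * Cg) * ENNReal.ofReal (min 1 (t ^ 2) * η) := by
  calc Fent r s * ENNReal.ofReal η
      ≤ ENNReal.ofReal (Cf * min 1 t * (Cg * min 1 t)) * ENNReal.ofReal η := by
        gcongr; exact Fent_le_ofReal_mul hr hs hrs hlog
    _ = ENNReal.ofReal (Cf * Cg) * ENNReal.ofReal (min 1 (t ^ 2) * η) := by
        rw [← ENNReal.ofReal_mul (by positivity), ← ENNReal.ofReal_mul (by positivity),
          ← min_one_sq ht]
        ring_nf

lemma fisher_withDensity_ofReal {X : Type*} [MeasurableSpace X] (η : X → X → ℝ)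
    (π : Measure X) [SigmaFinite π] {f : X → ℝ} (hf : Measurable f) (hf0 : ∀ x, 0 ≤ f x) :
    fisher η (π.withDensity fun x => ENNReal.ofReal (f x)) π =
      (1/2 : ℝ≥0∞) * ∫⁻ x, ∫⁻ y,
        (if x ≠ y then Fent (f x) (f y) * ENNReal.ofReal (η x y) else 0) ∂π ∂π := by
  rw [fisher, if_pos (withDensity_absolutelyContinuous _ _)]
  have hrn := Measure.rnDeriv_withDensity π hf.ennreal_ofReal
  congr 1
  refine lintegral_congr_ae (hrn.mono fun x hx => lintegral_congr_ae (hrn.mono fun y hy => ?_))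
  simp only [hx, hy, ENNReal.toReal_ofReal (hf0 _)]

lemma lintegral_lintegral_le_of_forall_lintegral_le {X Y : Type*}
    [MeasurableSpace X] [MeasurableSpace Y] (μ : Measure X) (ν : Measure Y)
    [SFinite μ] [IsProbabilityMeasure ν] {k : X → Y → ℝ≥0∞}
    (hk : Measurable (Function.uncurry k)) {c : ℝ≥0∞} (h : ∀ y, ∫⁻ x, k x y ∂μ ≤ c) :
    ∫⁻ x, ∫⁻ y, k x y ∂ν ∂μ ≤ c := by
  rw [lintegral_lintegral_swap hk.aemeasurable]
  calc ∫⁻ y, ∫⁻ x, k x y ∂μ ∂ν ≤ ∫⁻ _, c ∂ν := lintegral_mono h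
    _ = c := by simp

theorem fisher_finite_of_regular_density_general {d : ℕ}
    (π : Measure (EuclideanSpace ℝ (Fin d))) [IsProbabilityMeasure π]
    (η : EuclideanSpace ℝ (Fin d) → EuclideanSpace ℝ (Fin d) → ℝ)
    (hηmeas : Measurable (Function.uncurry η))
    (M : ℝ)
    (hM : ∀ y, ∫⁻ x, ENNReal.ofReal (min 1 (‖x - y‖ ^ 2) * η x y) ∂π ≤ ENNReal.ofReal M)
    (f : EuclideanSpace ℝ (Fin d) → ℝ) (hfmeas : Measurable f) (hfpos : ∀ x, 0 < f x)
    (μ : Measure (EuclideanSpace ℝ (Fin d)))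
    (hμ : μ = π.withDensity (fun x => ENNReal.ofReal (f x)))
    (Cf Cg : ℝ) (hCf : 0 ≤ Cf) (hCg : 0 ≤ Cg)
    (hf : ∀ x y, |f x - f y| ≤ Cf * min 1 ‖x - y‖)
    (hg : ∀ x y, |Real.log (f x) - Real.log (f y)| ≤ Cg * min 1 ‖x - y‖) :
    fisher η μ π ≤ ENNReal.ofReal (Cf * Cg / 2 * M) := by
  subst hμ
  rw [fisher_withDensity_ofReal η π hfmeas fun x => (hfpos x).le]
  set k := fun x y => ENNReal.ofReal (min 1 (‖x - y‖ ^ 2) * η x y)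
  have hk : Measurable (Function.uncurry k) :=
    ((measurable_const.min
      ((measurable_fst.sub measurable_snd).norm.pow_const 2)).mul hηmeas).ennreal_ofReal
  calc (1/2 : ℝ≥0∞) * ∫⁻ x, ∫⁻ y, _ ∂π ∂π
      ≤ 1/2 * ∫⁻ x, ∫⁻ y, ENNReal.ofReal (Cf * Cg) * k x y ∂π ∂π := by
        gcongr with x y
        split_ifs
        · exact Fent_mul_le_of_abs_sub_le_mul_min (hfpos x) (hfpos y) (norm_nonneg _) hCf hCg
            (hf x y) (hg x y)
        · exact zero_le
    _ = 1/2 * ENNReal.ofReal (Cf * Cg) * ∫⁻ x, ∫⁻ y, k x y ∂π ∂π := by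
        simp_rw [lintegral_const_mul' _ _ ENNReal.ofReal_ne_top, mul_assoc]
    _ ≤ 1/2 * ENNReal.ofReal (Cf * Cg) * ENNReal.ofReal M := by
        gcongr; exact lintegral_lintegral_le_of_forall_lintegral_le π π hk hM
    _ = ENNReal.ofReal (Cf * Cg / 2 * M) := by
        rw [ENNReal.ofReal_mul (p := Cf * Cg / 2) (by positivity),
          ENNReal.ofReal_div_of_pos two_pos,
          ENNReal.ofReal_ofNat, one_div, ENNReal.div_eq_inv_mul]

/-- **Finiteness of the nonlocal Fisher information for regular densities.**
If `M` bounds `sup_y ∫ min(1,|x−y|²) η(x,y) dπ(x)`, and `μ = f·π` with `f > 0`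
satisfying `|f(x)−f(y)| ≤ C_f·min(1,|x−y|)` and `|log f(x)−log f(y)| ≤ C_g·min(1,|x−y|)`,
then `I_η(μ∣π) ≤ (C_f·C_g/2)·M`. -/
theorem fisher_finite_of_regular_density {d : ℕ}
    (π : Measure (EuclideanSpace ℝ (Fin d))) [IsProbabilityMeasure π]
    (η : EuclideanSpace ℝ (Fin d) → EuclideanSpace ℝ (Fin d) → ℝ)
    (hηmeas : Measurable (Function.uncurry η)) (hηnonneg : ∀ x y, 0 ≤ η x y)
    (M : ℝ) (hM0 : 0 ≤ M)
    (hM : ∀ y, ∫⁻ x, ENNReal.ofReal (min 1 (‖x - y‖ ^ 2) * η x y) ∂π ≤ ENNReal.ofReal M)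
    (f : EuclideanSpace ℝ (Fin d) → ℝ) (hfmeas : Measurable f) (hfpos : ∀ x, 0 < f x)
    (μ : Measure (EuclideanSpace ℝ (Fin d))) [IsProbabilityMeasure μ]
    (hμ : μ = π.withDensity (fun x => ENNReal.ofReal (f x)))
    (Cf Cg : ℝ) (hCf : 0 ≤ Cf) (hCg : 0 ≤ Cg)
    (hf : ∀ x y, |f x - f y| ≤ Cf * min 1 ‖x - y‖)
    (hg : ∀ x y, |Real.log (f x) - Real.log (f y)| ≤ Cg * min 1 ‖x - y‖) :
    fisher η μ π ≤ ENNReal.ofReal (Cf * Cg / 2 * M) :=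
  fisher_finite_of_regular_density_general π η hηmeas M hM f hfmeas hfpos μ hμ Cf Cg hCf hCg hf hg
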